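/- arXiv:2602.08628 — 2 statements merged into one kernel-verified Lean document; each statement's English description precedes it below -/
import Mathlib

section
/- The n-qubit symmetric cost operator C_{sym,n} = Σ_{m ∈ {0,1,2,3}^n} (⊗_i σ_{m(i)} ⊗ I_n - I_n ⊗ (⊗_i σ_{m(i)})^T)², acting on ℂ^{2^n} ⊗ ℂ^{2^n}, equals 2^{2n+1}·I - 2^{n+1}·|I_n⟩⟩⟨⟨I_n|, where |I_n⟩⟩ is the vectorization of the identity on ℂ^{2^n}. -/
open Matrix Kronecker
open scoped ComplexOrder

noncomputable def Pauli (m : Fin 4) : Matrix (Fin 2) (Fin 2) ℂ :=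
  if m = 0 then 1
  else if m = 1 then !![0, 1; 1, 0]
  else if m = 2 then !![0, -Complex.I; Complex.I, 0]
  else !![1, 0; 0, -1]

noncomputable def PauliProd (n : ℕ) (m : Fin n → Fin 4) :
    Matrix (Fin n → Fin 2) (Fin n → Fin 2) ℂ :=
  fun k l => ∏ i, Pauli (m i) (k i) (l i)

def pauliJ (m m' : Fin 4) : ℂ := if m = 0 ∨ m' = 0 ∨ m = m' then 1 else -1

def vecify {d : Type*} (A : Matrix d d ℂ) : d × d → ℂ := fun p => A p.1 p.2

noncomputable def vecProj {d : Type*} (A : Matrix d d ℂ) : Matrix (d × d) (d × d) ℂ :=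
  fun p q => vecify A p * star (vecify A q)

noncomputable def ptrace2 {d : Type*} [Fintype d] (P : Matrix (d × d) (d × d) ℂ) :
    Matrix d d ℂ := fun i j => ∑ k, P (i, k) (j, k)

noncomputable def ptrace1 {d : Type*} [Fintype d] (P : Matrix (d × d) (d × d) ℂ) :
    Matrix d d ℂ := fun i j => ∑ k, P (k, i) (k, j)

lemma Pauli_sq (m : Fin 4) : Pauli m * Pauli m = 1 := by
  fin_cases m <;>
    · ext i j
      fin_cases i <;> fin_cases j <;>
        simp [Pauli, Matrix.mul_apply, Fin.sum_univ_two, Matrix.one_apply, Complex.I_mul_I]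

lemma Pauli_sum (a b c d : Fin 2) :
    ∑ m : Fin 4, Pauli m a b * Pauli m c d
      = 2 * ((if a = d then (1:ℂ) else 0) * (if b = c then (1:ℂ) else 0)) := by
  fin_cases a <;> fin_cases b <;> fin_cases c <;> fin_cases d <;>
    simp [Pauli, Fin.sum_univ_four, Matrix.one_apply, Complex.I_mul_I] <;> norm_num

lemma prod_one_apply (n : ℕ) (k l : Fin n → Fin 2) :
    ∏ i, (1 : Matrix (Fin 2) (Fin 2) ℂ) (k i) (l i)
      = (1 : Matrix (Fin n → Fin 2) (Fin n → Fin 2) ℂ) k l := by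
  rw [Matrix.one_apply]
  by_cases h : k = l
  · simp [h, Matrix.one_apply]
  · rw [if_neg h]
    rw [funext_iff] at h; push_neg at h
    obtain ⟨i, hi⟩ := h
    exact Finset.prod_eq_zero (Finset.mem_univ i) (by simp [Matrix.one_apply, hi])

lemma PauliProd_sq (n : ℕ) (m : Fin n → Fin 4) : PauliProd n m * PauliProd n m = 1 := by
  ext k l
  rw [Matrix.mul_apply]
  simp only [PauliProd]
  calc ∑ j : Fin n → Fin 2, (∏ i, Pauli (m i) (k i) (j i)) * ∏ i, Pauli (m i) (j i) (l i)
      = ∑ j : Fin n → Fin 2, ∏ i, Pauli (m i) (k i) (j i) * Pauli (m i) (j i) (l i) := by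
        simp [Finset.prod_mul_distrib]
    _ = ∏ i, ∑ x : Fin 2, Pauli (m i) (k i) x * Pauli (m i) x (l i) :=
        (Fintype.prod_sum fun i x => Pauli (m i) (k i) x * Pauli (m i) x (l i)).symm
    _ = ∏ i, (1 : Matrix (Fin 2) (Fin 2) ℂ) (k i) (l i) := by
        refine Finset.prod_congr rfl fun i _ => ?_
        rw [← Pauli_sq (m i), Matrix.mul_apply]
    _ = (1 : Matrix (Fin n → Fin 2) (Fin n → Fin 2) ℂ) k l := prod_one_apply n k l

lemma PauliProd_kron_sum (n : ℕ) :
    ∑ m : Fin n → Fin 4, (PauliProd n m ⊗ₖ (PauliProd n m)ᵀ)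
      = ((2:ℂ) ^ n) • vecProj (1 : Matrix (Fin n → Fin 2) (Fin n → Fin 2) ℂ) := by
  ext ⟨i, j⟩ ⟨k, l⟩
  simp only [Matrix.sum_apply, Matrix.kroneckerMap_apply, Matrix.transpose_apply,
    Matrix.smul_apply, vecProj, vecify, smul_eq_mul, PauliProd]
  calc ∑ m : Fin n → Fin 4, (∏ a, Pauli (m a) (i a) (k a)) * ∏ a, Pauli (m a) (l a) (j a)
      = ∑ m : Fin n → Fin 4, ∏ a, Pauli (m a) (i a) (k a) * Pauli (m a) (l a) (j a) := by
        simp [Finset.prod_mul_distrib]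
    _ = ∏ a, ∑ x : Fin 4, Pauli x (i a) (k a) * Pauli x (l a) (j a) :=
        (Fintype.prod_sum fun a x => Pauli x (i a) (k a) * Pauli x (l a) (j a)).symm
    _ = ∏ a, 2 * ((if i a = j a then (1:ℂ) else 0) * (if k a = l a then (1:ℂ) else 0)) := by
        refine Finset.prod_congr rfl fun a _ => Pauli_sum _ _ _ _
    _ = (2:ℂ)^n * ((1 : Matrix (Fin n → Fin 2) (Fin n → Fin 2) ℂ) i j *
          star ((1 : Matrix (Fin n → Fin 2) (Fin n → Fin 2) ℂ) k l)) := by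
        rw [Finset.prod_mul_distrib, Finset.prod_const, Finset.prod_mul_distrib]
        have h1 : ∏ a, (if i a = j a then (1:ℂ) else 0)
            = (1 : Matrix (Fin n → Fin 2) (Fin n → Fin 2) ℂ) i j := by
          simpa [Matrix.one_apply] using prod_one_apply n i j
        have h2 : ∏ a, (if k a = l a then (1:ℂ) else 0)
            = (1 : Matrix (Fin n → Fin 2) (Fin n → Fin 2) ℂ) k l := by
          simpa [Matrix.one_apply] using prod_one_apply n k l
        have h3 : star ((1 : Matrix (Fin n → Fin 2) (Fin n → Fin 2) ℂ) k l)
            = (1 : Matrix (Fin n → Fin 2) (Fin n → Fin 2) ℂ) k l := by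
          simp [Matrix.one_apply, apply_ite star]
        rw [h1, h2, h3]
        simp

lemma term_eq (n : ℕ) (m : Fin n → Fin 4) :
    (PauliProd n m ⊗ₖ (1 : Matrix (Fin n → Fin 2) (Fin n → Fin 2) ℂ)
      - (1 : Matrix (Fin n → Fin 2) (Fin n → Fin 2) ℂ) ⊗ₖ (PauliProd n m)ᵀ) ^ 2
    = (2:ℂ) • (1 : Matrix ((Fin n → Fin 2) × (Fin n → Fin 2)) ((Fin n → Fin 2) × (Fin n → Fin 2)) ℂ)
      - (2:ℂ) • (PauliProd n m ⊗ₖ (PauliProd n m)ᵀ) := by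
  set P := PauliProd n m
  have hP : P * P = 1 := PauliProd_sq n m
  rw [pow_two, sub_mul, mul_sub, mul_sub]
  simp only [← Matrix.mul_kronecker_mul, Matrix.one_mul, Matrix.mul_one,
    ← Matrix.transpose_mul, hP, Matrix.transpose_one, Matrix.one_kronecker_one]
  module

theorem n_qubit_symmetric_cost (n : ℕ) :
    (∑ m : Fin n → Fin 4,
      (PauliProd n m ⊗ₖ (1 : Matrix (Fin n → Fin 2) (Fin n → Fin 2) ℂ)
        - (1 : Matrix (Fin n → Fin 2) (Fin n → Fin 2) ℂ) ⊗ₖ (PauliProd n m)ᵀ) ^ 2)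
    = ((2 : ℂ) ^ (2 * n + 1)) •
        (1 : Matrix ((Fin n → Fin 2) × (Fin n → Fin 2)) ((Fin n → Fin 2) × (Fin n → Fin 2)) ℂ)
      - ((2 : ℂ) ^ (n + 1)) • vecProj (1 : Matrix (Fin n → Fin 2) (Fin n → Fin 2) ℂ) := by
  simp only [term_eq]
  rw [Finset.sum_sub_distrib, Finset.sum_const, ← Finset.smul_sum, PauliProd_kron_sum,
    Finset.card_univ]
  simp only [Fintype.card_pi, Fintype.card_fin, Finset.prod_const, Finset.card_univ]
  rw [smul_smul, ← Nat.cast_smul_eq_nsmul ℂ, smul_smul]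
  congr 2
  · push_cast
    rw [pow_succ, pow_mul]
    norm_num
  · rw [pow_succ]
    ring
end

section
/- For any two pure states ρ = |ψ⟩⟨ψ| and ω = |φ⟩⟨φ| on ℂ^{2^n}, the squared symmetric quantum Wasserstein distance equals D²(ρ,ω) = 2^{2n+1} - 2^{n+1}|⟨ψ,φ⟩|²; in particular D²(ρ,ω) ≤ 2^{2n+1} with equality iff ψ ⊥ φ, and D²(ρ,ρ) = 2^{2n+1} - 2^{n+1} > 0. -/
open Matrix Kronecker
open scoped ComplexOrder

/-!
A positive semidefinite `P` whose second marginal is a pure state `|φ⟩⟨φ|` is a product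
`|φ⟩⟨φ| ⊗ ρ'`: for `c ⟂ φ` the numbers `⟨c ⊗ e_k, P (c ⊗ e_k)⟩ ≥ 0` sum over `k` to
`⟨c, |φ⟩⟨φ| c⟩ = 0`, so every `c ⊗ e_k` lies in the kernel of `P`. Hence the only coupling of two
pure states is `ω ⊗ ρᵀ`, the infimum is attained at it, and its cost is
`2^(2n+1) tr ω tr ρ - 2^(n+1) tr (ω ρ) = 2^(2n+1) - 2^(n+1) |⟨ψ, φ⟩|²`.
-/

section Coupling

variable {d : Type*} [Fintype d]

theorem ptrace2_kronecker (A B : Matrix d d ℂ) : ptrace2 (A ⊗ₖ B) = B.trace • A := by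
  ext i j
  simp [ptrace2, trace, Finset.mul_sum, mul_comm]

theorem ptrace1_kronecker (A B : Matrix d d ℂ) : ptrace1 (A ⊗ₖ B) = A.trace • B := by
  ext i j
  simp [ptrace1, trace, Finset.sum_mul]

theorem eq_dotProduct_smul_star_of_orthogonal {φ f : d → ℂ} (hφ : star φ ⬝ᵥ φ = 1)
    (hf : ∀ c, star φ ⬝ᵥ c = 0 → f ⬝ᵥ c = 0) : f = (f ⬝ᵥ φ) • star φ := by
  classical
  ext j
  have h := hf (Pi.single j 1 - star (φ j) • φ) (by
    simp [dotProduct_sub, dotProduct_smul, hφ])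
  simp only [dotProduct_sub, dotProduct_single, dotProduct_smul, smul_eq_mul, mul_one] at h
  simp [sub_eq_zero.mp h, mul_comm]

theorem Matrix.PosSemidef.dotProduct_eq_zero_of_ptrace2 {P : Matrix (d × d) (d × d) ℂ}
    (hP : P.PosSemidef) {c : d → ℂ} (hc : star c ⬝ᵥ ptrace2 P *ᵥ c = 0) (p : d × d) (l : d) :
    (fun a => P p (a, l)) ⬝ᵥ c = 0 := by
  classical
  let x : d → d × d → ℂ := fun k q => if q.2 = k then c q.1 else 0
  have hsum : ∑ k, star (x k) ⬝ᵥ P *ᵥ x k = star c ⬝ᵥ ptrace2 P *ᵥ c := by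
    simp only [x, dotProduct, mulVec, ptrace2, Fintype.sum_prod_type, Finset.mul_sum,
      Finset.sum_mul, Pi.star_apply, apply_ite (star : ℂ → ℂ), star_zero, ite_mul, zero_mul,
      mul_ite, mul_zero, Finset.sum_ite_eq', Finset.mem_univ, if_true]
    rw [Finset.sum_comm]
    refine Finset.sum_congr rfl fun i _ => ?_
    simp only [Finset.sum_ite_irrel, Finset.sum_const_zero, Finset.sum_ite_eq', Finset.mem_univ,
      if_true]
    exact Finset.sum_comm
  have hzero : star (x l) ⬝ᵥ P *ᵥ x l = 0 :=
    (Finset.sum_eq_zero_iff_of_nonneg fun k _ => hP.dotProduct_mulVec_nonneg (x k)).mp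
      (hsum.trans hc) l (Finset.mem_univ l)
  have := congrFun ((hP.dotProduct_mulVec_zero_iff (x l)).mp hzero) p
  simpa [x, mulVec, dotProduct, Fintype.sum_prod_type] using this

theorem Matrix.PosSemidef.eq_kronecker_ptrace1 {P : Matrix (d × d) (d × d) ℂ} (hP : P.PosSemidef)
    {φ : d → ℂ} (hφ : star φ ⬝ᵥ φ = 1) (h2 : ptrace2 P = vecMulVec φ (star φ)) :
    P = vecMulVec φ (star φ) ⊗ₖ ptrace1 P := by
  have hcol : ∀ p l j, P p (j, l) = star (φ j) * ∑ a, P p (a, l) * φ a := by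
    intro p l j
    have hker : ∀ c, star φ ⬝ᵥ c = 0 → (fun a => P p (a, l)) ⬝ᵥ c = 0 := fun c hc =>
      hP.dotProduct_eq_zero_of_ptrace2 (by simp [h2, vecMulVec_mulVec, hc]) p l
    have := congrFun (eq_dotProduct_smul_star_of_orthogonal hφ hker) j
    simpa [dotProduct, mul_comm] using this
  have hrow : ∀ q i k, P (i, k) q = φ i * ∑ a, star (φ a) * P (a, k) q := by
    intro q i k
    rw [← hP.1.apply (i, k) q, hcol q k i, star_mul', star_star, star_sum]
    refine congrArg _ (Finset.sum_congr rfl fun a _ => ?_)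
    rw [star_mul', hP.1.apply, mul_comm]
  have hprod : ∀ i k j l, P (i, k) (j, l) =
      φ i * star (φ j) * ∑ a, ∑ b, star (φ b) * P (b, k) (a, l) * φ a := by
    intro i k j l
    rw [hcol _ l j]
    simp only [hrow _ i k, Finset.mul_sum, Finset.sum_mul]
    exact Finset.sum_congr rfl fun a _ => Finset.sum_congr rfl fun b _ => by ring
  have htr : ∀ k l, ptrace1 P k l = ∑ a, ∑ b, star (φ b) * P (b, k) (a, l) * φ a := by
    intro k l
    simp only [ptrace1]
    rw [Finset.sum_congr rfl fun a _ => hprod a k a l, ← Finset.sum_mul]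
    have hnorm : ∑ a, φ a * star (φ a) = 1 := by simpa [dotProduct, mul_comm] using hφ
    rw [hnorm, one_mul]
  ext ⟨i, k⟩ ⟨j, l⟩
  rw [kronecker_apply, vecMulVec_apply, htr, hprod]
  rfl

theorem posSemidef_ptrace_eq_vecMulVec_iff_eq_kronecker {ψ φ : d → ℂ} (hψ : star ψ ⬝ᵥ ψ = 1)
    (hφ : star φ ⬝ᵥ φ = 1) (P : Matrix (d × d) (d × d) ℂ) :
    (P.PosSemidef ∧ ptrace2 P = vecMulVec φ (star φ) ∧ ptrace1 P = (vecMulVec ψ (star ψ))ᵀ) ↔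
      P = vecMulVec φ (star φ) ⊗ₖ (vecMulVec ψ (star ψ))ᵀ := by
  constructor
  · rintro ⟨hP, h2, h1⟩
    rw [← h1]
    exact hP.eq_kronecker_ptrace1 hφ h2
  · rintro rfl
    refine ⟨(posSemidef_vecMulVec_self_star φ).kronecker
      (posSemidef_vecMulVec_self_star ψ).transpose, ?_, ?_⟩
    · rw [ptrace2_kronecker, trace_transpose, trace_vecMulVec, dotProduct_comm, hψ, one_smul]
    · rw [ptrace1_kronecker, trace_vecMulVec, dotProduct_comm, hφ, one_smul]

theorem trace_kronecker_mul_vecProj_one [DecidableEq d] (A B : Matrix d d ℂ) :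
    ((A ⊗ₖ B) * vecProj 1).trace = (A * Bᵀ).trace := by
  simp [trace, mul_apply, vecProj, vecify, one_apply, Fintype.sum_prod_type]

theorem trace_vecMulVec_mul_vecMulVec_self_star (ψ φ : d → ℂ) :
    (vecMulVec φ (star φ) * vecMulVec ψ (star ψ)).trace = (‖star ψ ⬝ᵥ φ‖ : ℂ) ^ 2 := by
  rw [vecMulVec_mul_vecMulVec, trace_vecMulVec, dotProduct_smul, star_dotProduct, smul_eq_mul,
    dotProduct_comm, mul_comm]
  exact Complex.mul_conj' _

theorem re_trace_pure_coupling_mul_cost [DecidableEq d] {ψ φ : d → ℂ} (hψ : star ψ ⬝ᵥ ψ = 1)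
    (hφ : star φ ⬝ᵥ φ = 1) (a b : ℝ) :
    ((vecMulVec φ (star φ) ⊗ₖ (vecMulVec ψ (star ψ))ᵀ) *
      ((a : ℂ) • 1 - (b : ℂ) • vecProj 1)).trace.re = a - b * ‖star ψ ⬝ᵥ φ‖ ^ 2 := by
  rw [Matrix.mul_sub, Matrix.mul_smul, Matrix.mul_smul, Matrix.mul_one, trace_sub, trace_smul,
    trace_smul, trace_kronecker, trace_kronecker_mul_vecProj_one, transpose_transpose,
    trace_vecMulVec_mul_vecMulVec_self_star, trace_transpose, trace_vecMulVec, trace_vecMulVec,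
    dotProduct_comm φ, dotProduct_comm ψ, hφ, hψ]
  simp only [smul_eq_mul, mul_one]
  norm_cast

end Coupling

theorem wasserstein_distance_pure_states (n : ℕ) (hn : 1 ≤ n)
    (C : Matrix ((Fin n → Fin 2) × (Fin n → Fin 2)) ((Fin n → Fin 2) × (Fin n → Fin 2)) ℂ)
    (hC : C = ((2 : ℂ) ^ (2 * n + 1)) • 1
        - ((2 : ℂ) ^ (n + 1)) • vecProj (1 : Matrix (Fin n → Fin 2) (Fin n → Fin 2) ℂ))
    (D2 : Matrix (Fin n → Fin 2) (Fin n → Fin 2) ℂ →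
          Matrix (Fin n → Fin 2) (Fin n → Fin 2) ℂ → ℝ)
    (hD : ∀ ρ ω, D2 ρ ω = sInf {x : ℝ |
      ∃ Pmat : Matrix ((Fin n → Fin 2) × (Fin n → Fin 2)) ((Fin n → Fin 2) × (Fin n → Fin 2)) ℂ,
        Pmat.PosSemidef ∧ ptrace2 Pmat = ω ∧ ptrace1 Pmat = ρᵀ ∧ ((Pmat * C).trace).re = x})
    (ψ φ : (Fin n → Fin 2) → ℂ) (hψ : star ψ ⬝ᵥ ψ = 1) (hφ : star φ ⬝ᵥ φ = 1)
    (ρ ω : Matrix (Fin n → Fin 2) (Fin n → Fin 2) ℂ)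
    (hρ : ρ = vecMulVec ψ (star ψ)) (hω : ω = vecMulVec φ (star φ)) :
    D2 ρ ω = (2 : ℝ) ^ (2 * n + 1) - (2 : ℝ) ^ (n + 1) * ‖star ψ ⬝ᵥ φ‖ ^ 2 ∧
    D2 ρ ω ≤ (2 : ℝ) ^ (2 * n + 1) ∧
    (D2 ρ ω = (2 : ℝ) ^ (2 * n + 1) ↔ star ψ ⬝ᵥ φ = 0) ∧
    D2 ρ ρ = (2 : ℝ) ^ (2 * n + 1) - (2 : ℝ) ^ (n + 1) ∧
    0 < D2 ρ ρ := by
  have hC' : C = (((2 : ℝ) ^ (2 * n + 1) : ℝ) : ℂ) • 1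
      - (((2 : ℝ) ^ (n + 1) : ℝ) : ℂ) • vecProj 1 := by
    rw [hC]; push_cast; rfl
  have hpure : ∀ u v : (Fin n → Fin 2) → ℂ, star u ⬝ᵥ u = 1 → star v ⬝ᵥ v = 1 →
      D2 (vecMulVec u (star u)) (vecMulVec v (star v)) =
        (2 : ℝ) ^ (2 * n + 1) - (2 : ℝ) ^ (n + 1) * ‖star u ⬝ᵥ v‖ ^ 2 := by
    intro u v hu hv
    simp only [hD, ← and_assoc, posSemidef_ptrace_eq_vecMulVec_iff_eq_kronecker hu hv,
      exists_eq_left, Set.ofPred_eq_eq_singleton', csInf_singleton, hC',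
      re_trace_pure_coupling_mul_cost hu hv]
  subst hρ hω
  have hρω := hpure ψ φ hψ hφ
  have hρρ : D2 (vecMulVec ψ (star ψ)) (vecMulVec ψ (star ψ)) =
      (2 : ℝ) ^ (2 * n + 1) - (2 : ℝ) ^ (n + 1) := by
    simpa [hψ] using hpure ψ ψ hψ hψ
  refine ⟨hρω, ?_, ?_, hρρ, ?_⟩
  · rw [hρω]
    exact sub_le_self _ (by positivity)
  · rw [hρω, sub_eq_self]
    simp
  · rw [hρρ, sub_pos]
    exact pow_lt_pow_right₀ one_lt_two (by omega)
end
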